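/- arXiv:1707.05467 — 3 statements merged into one kernel-verified Lean document; each statement's English description precedes it below -/
import Mathlib

section
/- Let η be a holomorphic connection on the holomorphic principal H-bundle E_H, and let 𝜂̃ : X × 𝔤 → At_ρ(E_H) be the holomorphic G-connection defined by (x, v) ↦ (η(d'ρ(x, v)), (x, v)). Then η is strongly adapted to 𝜂̃ if and only if for all v ∈ 𝔤 and all x ∈ X the contraction i_{d'ρ(x,v)}(𝒦(η)(x)) ∈ (T^*X ⊗ ad(E_H))_x of the curvature 𝒦(η)(x) by the tangent vector d'ρ(x, v) ∈ T_x X vanishes. -/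
/-!
Since `dp ∘ η = id`, an element `a` of `A` lies in the image of `η` exactly when `a = η (dp a)`.
As `dp` preserves brackets, `dp ⁅η s, η t⁆ = ⁅s, t⁆`, so `⁅η s, η t⁆` lies in the image of `η`
exactly when the curvature `⁅η s, η t⁆ - η ⁅s, t⁆` vanishes. The second half of strong
adaptedness, `η (σ v) ∈ image η`, holds for free.
-/

theorem Function.LeftInverse.mem_range_iff {α β : Type*} {f : α → β} {g : β → α}
    (h : Function.LeftInverse g f) {b : β} : b ∈ Set.range f ↔ f (g b) = b :=
  ⟨fun ⟨a, ha⟩ => ha ▸ congrArg f (h a), fun hb => ⟨g b, hb⟩⟩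

section Curvature

variable {T A : Type*} [LieRing T] [LieRing A]

def curvature (η : T → A) (s t : T) : A := ⁅η s, η t⁆ - η ⁅s, t⁆

theorem bracket_mem_range_iff_curvature_eq_zero {η : T → A} {dp : A → T}
    (hη : Function.LeftInverse dp η) (hdp : ∀ a b : A, dp ⁅a, b⁆ = ⁅dp a, dp b⁆) (s t : T) :
    ⁅η s, η t⁆ ∈ Set.range η ↔ curvature η s t = 0 := by
  rw [hη.mem_range_iff, hdp, hη s, hη t, curvature, sub_eq_zero, eq_comm]

end Curvature

theorem strongly_adapted_to_etaTilde_iff_contraction_of_curvature_vanishes_general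
    (R : Type) [CommRing R]
    (T : Type) [LieRing T] [LieAlgebra ℂ T] [Module R T]
    (A : Type) [LieRing A] [Module R A]
    (𝔤 : Type) [LieRing 𝔤] [LieAlgebra ℂ 𝔤]
    -- the Atiyah exact sequence 0 → ad(E_H) → At(E_H) → TX → 0
    (dp : A →ₗ[R] T)
    (hdp_bracket : ∀ a b : A, dp ⁅a, b⁆ = ⁅dp a, dp b⁆)
    -- the infinitesimal action of 𝔤 = Lie(G) on X
    (σ : 𝔤 →ₗ[ℂ] T)
    -- a holomorphic connection η on E_H
    (η : T →ₗ[R] A) (hη : ∀ t, dp (η t) = t) :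
    -- η is strongly adapted to the G-connection η̃ : v ↦ (η (σ v), v), i.e. η is
    -- adapted to η̃ and the image of J ∘ η̃ is contained in the image of η ...
    ((∀ (v : 𝔤) (t : T), ⁅η (σ v), η t⁆ ∈ LinearMap.range η) ∧
        (∀ v : 𝔤, η (σ v) ∈ LinearMap.range η)) ↔
      -- ... iff the contraction of the curvature 𝒦(η) by d'ρ(·, v) vanishes for
      -- every v ∈ 𝔤 (at every point of X)
      (∀ (v : 𝔤) (t : T), ⁅η (σ v), η t⁆ - η ⁅σ v, t⁆ = 0) := by
  have hself : ∀ v : 𝔤, η (σ v) ∈ LinearMap.range η := fun v => LinearMap.mem_range_self η (σ v)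
  simp only [hself, implies_true, and_true]
  exact forall₂_congr fun v t => bracket_mem_range_iff_curvature_eq_zero hη hdp_bracket (σ v) t

theorem strongly_adapted_to_etaTilde_iff_contraction_of_curvature_vanishes
    (R : Type) [CommRing R] [Algebra ℂ R]
    (T : Type) [LieRing T] [LieAlgebra ℂ T] [Module R T]
    (A : Type) [LieRing A] [LieAlgebra ℂ A] [Module R A]
    (adE : Type) [AddCommGroup adE] [Module R adE]
    (𝔤 : Type) [LieRing 𝔤] [LieAlgebra ℂ 𝔤]
    -- the Atiyah exact sequence 0 → ad(E_H) → At(E_H) → TX → 0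
    (ι : adE →ₗ[R] A) (dp : A →ₗ[R] T)
    (hι : Function.Injective ι) (hdp : Function.Surjective dp)
    (hexact : ∀ a : A, dp a = 0 ↔ a ∈ LinearMap.range ι)
    (hdp_bracket : ∀ a b : A, dp ⁅a, b⁆ = ⁅dp a, dp b⁆)
    -- the infinitesimal action of 𝔤 = Lie(G) on X
    (σ : 𝔤 →ₗ[ℂ] T) (hσ : ∀ v w : 𝔤, σ ⁅v, w⁆ = ⁅σ v, σ w⁆)
    -- a holomorphic connection η on E_H
    (η : T →ₗ[R] A) (hη : ∀ t, dp (η t) = t) :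
    -- η is strongly adapted to the G-connection η̃ : v ↦ (η (σ v), v), i.e. η is
    -- adapted to η̃ and the image of J ∘ η̃ is contained in the image of η ...
    ((∀ (v : 𝔤) (t : T), ⁅η (σ v), η t⁆ ∈ LinearMap.range η) ∧
        (∀ v : 𝔤, η (σ v) ∈ LinearMap.range η)) ↔
      -- ... iff the contraction of the curvature 𝒦(η) by d'ρ(·, v) vanishes for
      -- every v ∈ 𝔤 (at every point of X)
      (∀ (v : 𝔤) (t : T), ⁅η (σ v), η t⁆ - η ⁅σ v, t⁆ = 0) :=
  strongly_adapted_to_etaTilde_iff_contraction_of_curvature_vanishes_general R T A 𝔤 dp hdp_bracket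
    σ η hη
end

section
/- Let η be a holomorphic connection on the holomorphic principal H-bundle E_H, and let 𝜂̃ : X × 𝔤 → At_ρ(E_H) be the holomorphic G-connection defined by (x, v) ↦ (η(d'ρ(x, v)), (x, v)). Then η is adapted to 𝜂̃ if and only if i_{d'ρ(x,v)}(𝒦(η)(x)) = 0 for all v ∈ 𝔤 and x ∈ X. In particular, if η is adapted to 𝜂̃ then η is strongly adapted to 𝜂̃. -/
/-!
A section `a` of the Atiyah bundle lies in the image of the splitting `η` iff `a = η (dp a)`.
Since `dp` preserves brackets, `dp ⁅η s, η t⁆ = ⁅s, t⁆`, so `⁅η s, η t⁆` is horizontal exactly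
when the curvature `⁅η s, η t⁆ - η ⁅s, t⁆` vanishes. Strong adaptedness is automatic because
`J ∘ η̃ = η ∘ σ` takes values in the image of `η`.
-/

open LinearMap

theorem lie_mem_range_iff_lie_sub_map_lie_eq_zero {R T A : Type*} [Ring R]
    [LieRing T] [Module R T] [LieRing A] [Module R A] {dp : A →ₗ[R] T} {η : T →ₗ[R] A}
    (hη : Function.LeftInverse dp η) (hdp_bracket : ∀ a b : A, dp ⁅a, b⁆ = ⁅dp a, dp b⁆)
    (s t : T) :
    ⁅η s, η t⁆ ∈ range η ↔ ⁅η s, η t⁆ - η ⁅s, t⁆ = 0 := by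
  rw [range_eq_ker_of_leftInverse hη, mem_ker, LinearMap.sub_apply, comp_apply, id_apply,
    hdp_bracket, hη s, hη t, ← neg_sub, neg_eq_zero]

theorem adapted_to_etaTilde_iff_contraction_vanishes_and_adapted_implies_strongly_general
    (R : Type) [CommRing R]
    (T : Type) [LieRing T] [LieAlgebra ℂ T] [Module R T]
    (A : Type) [LieRing A] [LieAlgebra ℂ A] [Module R A]
    (𝔤 : Type) [LieRing 𝔤] [LieAlgebra ℂ 𝔤]
    -- the Atiyah exact sequence 0 → ad(E_H) → At(E_H) → TX → 0
    (dp : A →ₗ[R] T)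
    (hdp_bracket : ∀ a b : A, dp ⁅a, b⁆ = ⁅dp a, dp b⁆)
    -- the infinitesimal action of 𝔤 = Lie(G) on X
    (σ : 𝔤 →ₗ[ℂ] T)
    -- a holomorphic connection η on E_H
    (η : T →ₗ[R] A) (hη : ∀ t, dp (η t) = t) :
    -- η is adapted to η̃ iff the contraction of 𝒦(η) by d'ρ(·,v) vanishes for
    -- all v ∈ 𝔤 (at every point of X) ...
    ((∀ (v : 𝔤) (t : T), ⁅η (σ v), η t⁆ ∈ LinearMap.range η) ↔
        (∀ (v : 𝔤) (t : T), ⁅η (σ v), η t⁆ - η ⁅σ v, t⁆ = 0)) ∧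
      -- ... and in particular, if η is adapted to η̃ then η is strongly adapted
      -- to η̃
      ((∀ (v : 𝔤) (t : T), ⁅η (σ v), η t⁆ ∈ LinearMap.range η) →
        ((∀ (v : 𝔤) (t : T), ⁅η (σ v), η t⁆ ∈ LinearMap.range η) ∧
          (∀ v : 𝔤, η (σ v) ∈ LinearMap.range η))) :=
  ⟨forall₂_congr fun v t => lie_mem_range_iff_lie_sub_map_lie_eq_zero hη hdp_bracket (σ v) t,
    fun adapted => ⟨adapted, fun v => mem_range_self η (σ v)⟩⟩

theorem adapted_to_etaTilde_iff_contraction_vanishes_and_adapted_implies_strongly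
    (R : Type) [CommRing R] [Algebra ℂ R]
    (T : Type) [LieRing T] [LieAlgebra ℂ T] [Module R T]
    (A : Type) [LieRing A] [LieAlgebra ℂ A] [Module R A]
    (adE : Type) [AddCommGroup adE] [Module R adE]
    (𝔤 : Type) [LieRing 𝔤] [LieAlgebra ℂ 𝔤]
    -- the Atiyah exact sequence 0 → ad(E_H) → At(E_H) → TX → 0
    (ι : adE →ₗ[R] A) (dp : A →ₗ[R] T)
    (hι : Function.Injective ι) (hdp : Function.Surjective dp)
    (hexact : ∀ a : A, dp a = 0 ↔ a ∈ LinearMap.range ι)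
    (hdp_bracket : ∀ a b : A, dp ⁅a, b⁆ = ⁅dp a, dp b⁆)
    -- the infinitesimal action of 𝔤 = Lie(G) on X
    (σ : 𝔤 →ₗ[ℂ] T) (hσ : ∀ v w : 𝔤, σ ⁅v, w⁆ = ⁅σ v, σ w⁆)
    -- a holomorphic connection η on E_H
    (η : T →ₗ[R] A) (hη : ∀ t, dp (η t) = t) :
    -- η is adapted to η̃ iff the contraction of 𝒦(η) by d'ρ(·,v) vanishes for
    -- all v ∈ 𝔤 (at every point of X) ...
    ((∀ (v : 𝔤) (t : T), ⁅η (σ v), η t⁆ ∈ LinearMap.range η) ↔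
        (∀ (v : 𝔤) (t : T), ⁅η (σ v), η t⁆ - η ⁅σ v, t⁆ = 0)) ∧
      -- ... and in particular, if η is adapted to η̃ then η is strongly adapted
      -- to η̃
      ((∀ (v : 𝔤) (t : T), ⁅η (σ v), η t⁆ ∈ LinearMap.range η) →
        ((∀ (v : 𝔤) (t : T), ⁅η (σ v), η t⁆ ∈ LinearMap.range η) ∧
          (∀ v : 𝔤, η (σ v) ∈ LinearMap.range η))) :=
  adapted_to_etaTilde_iff_contraction_vanishes_and_adapted_implies_strongly_general R T A 𝔤 dp
    hdp_bracket σ η hη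
end

section
/- Let X = ℂ², G = ℂ = H, and let E_H = ℂ² × ℂ → ℂ² be the trivial principal ℂ-bundle. Let ρ be the action of ℂ on ℂ² given by (z, (x, y)) ↦ (x + z, y), and let h be the holomorphic ℂ-connection on E_H associated to the ℂ-action on E_H = X × ℂ given by ρ on X and the trivial action on the fiber ℂ. Let D be the holomorphic connection on E_H defined by f ↦ df + x f·dy for holomorphic functions f on ℂ² (holomorphic sections of E_H being holomorphic functions). Then D satisfies the strong adaptedness inclusion image(J ∘ h) ⊂ image(D) (condition (Jc)), but D is not adapted to h, i.e., the condition [J ∘ h(X × {v}), D(TX)] ⊂ D(TX) for all v ∈ ℂ (condition (a1)) fails. -/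
/-!
STATEMENT 14 (the second example in Section 3.1 of "Equivariant bundles and
adapted connections").

Here `X = ℂ²`, `G = ℂ = H`, and `E_H = ℂ² × ℂ → ℂ²` is the trivial principal
`ℂ`-bundle.  Since the structure group `ℂ` is abelian, the `H`-invariant vector
fields on `E_H = ℂ² × ℂ` (i.e. the sections of the Atiyah bundle `At(E_H)`)
are exactly the fields `V + g ∂_w`, encoded below as pairs `(V, g)` with
`V : ℂ² → ℂ²` a vector field on `ℂ²` and `g : ℂ² → ℂ`; their Lie bracket is
`⁅(V, g), (W, k)⁆ = ([V, W], V k - W g)`.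

* The action of `ℂ` on `ℂ²` is `ρ (z, (x, y)) = (x + z, y)`; together with the
  trivial action on the fiber it gives the `ℂ`-action on `E_H`, whose induced
  holomorphic `ℂ`-connection `h` satisfies `J ∘ h (v) = (v ∂_x, 0) = hC v`.
* The holomorphic connection `D : f ↦ df + x f dy` on `E_H` corresponds to the
  connection form `ω = x dy`, i.e. `D` sends the vector field `V` to its
  horizontal lift `ηD V = (V, ω(V))` where `ω(V) p = p.1 * (V p).2`.
* A section `a = (V, g)` of `At(E_H)` lies (pointwise) in the horizontal
  subbundle `D(TX) ⊆ At(E_H)` exactly when `g p = p.1 * (V p).2` for all `p`;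
  this is the predicate `Horiz`.
* `D` is adapted to `h` iff `⁅J ∘ h (v), D V⁆` lies in `D(TX)` for every
  `v ∈ ℂ` and every holomorphic vector field `V` on `ℂ²` (condition (a1)), and
  the strong adaptedness inclusion `image (J ∘ h) ⊆ image D` (condition (Jc))
  says that `J ∘ h (v)` lies in `D(TX)` for every `v ∈ ℂ`.

The statement: condition (Jc) holds for `D`, while condition (a1) fails.
-/

/-- Vector fields on `ℂ²`. -/
abbrev VF2 : Type := (ℂ × ℂ) → (ℂ × ℂ)

/-- The Lie bracket of vector fields on `ℂ²`. -/
noncomputable def brkt (V W : VF2) : VF2 :=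
  fun p => fderiv ℂ W p (V p) - fderiv ℂ V p (W p)

/-- Sections of the Atiyah bundle of the trivial principal `ℂ`-bundle
`ℂ² × ℂ → ℂ²`: pairs `(V, g)` standing for the invariant field `V + g ∂_w`. -/
abbrev AtTriv : Type := VF2 × ((ℂ × ℂ) → ℂ)

/-- The Lie bracket on sections of the Atiyah bundle. -/
noncomputable def brktAt (a b : AtTriv) : AtTriv :=
  (brkt a.1 b.1, fun p => fderiv ℂ b.2 p (a.1 p) - fderiv ℂ a.2 p (b.1 p))

/-- The holomorphic connection `D : f ↦ df + x f dy` on the trivial bundle,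
as the horizontal lift `V ↦ (V, ω(V))` with connection form `ω = x dy`. -/
noncomputable def ηD (V : VF2) : AtTriv := (V, fun p => p.1 * (V p).2)

/-- `J ∘ h (v)` for the `ℂ`-connection `h` induced by the action
`(z, (x, y, w)) ↦ (x + z, y, w)` of `ℂ` on `ℂ² × ℂ`: the constant field
`v ∂_x`. -/
def hC (v : ℂ) : AtTriv := (fun _ => (v, 0), fun _ => 0)

/-- A section of `At(E_H)` lies pointwise in the horizontal subbundle
`D(TX)` of the connection `D`. -/
def Horiz (a : AtTriv) : Prop := ∀ p : ℂ × ℂ, a.2 p = p.1 * (a.1 p).2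

theorem horiz_hC (v : ℂ) : Horiz (hC v) := fun p => by simp [hC]

theorem brktAt_hC_ηD_fst (v : ℂ) (V : VF2) (p : ℂ × ℂ) :
    (brktAt (hC v) (ηD V)).1 p = fderiv ℂ V p (v, 0) := by
  simp [brktAt, brkt, hC, ηD]

theorem brktAt_hC_ηD_snd (v : ℂ) {V : VF2} (hV : Differentiable ℂ V) (p : ℂ × ℂ) :
    (brktAt (hC v) (ηD V)).2 p = v * (V p).2 + p.1 * (fderiv ℂ V p (v, 0)).2 := by
  have hω : HasFDerivAt (fun q : ℂ × ℂ => q.1 * (V q).2)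
      (p.1 • (ContinuousLinearMap.snd ℂ ℂ ℂ).comp (fderiv ℂ V p) +
        (V p).2 • ContinuousLinearMap.fst ℂ ℂ ℂ) p :=
    hasFDerivAt_fst.mul (hasFDerivAt_snd.comp p (hV p).hasFDerivAt)
  simp [brktAt, hC, ηD, hω.fderiv]
  ring

/-- The failure of horizontality is the curvature `dω = dx ∧ dy` evaluated on `(v ∂_x, V)`, i.e. `v dy(V)`. -/
theorem horiz_brktAt_hC_ηD_iff (v : ℂ) {V : VF2} (hV : Differentiable ℂ V) :
    Horiz (brktAt (hC v) (ηD V)) ↔ ∀ p, v * (V p).2 = 0 := by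
  refine forall_congr' fun p => ?_
  rw [brktAt_hC_ηD_snd v hV, brktAt_hC_ηD_fst]
  constructor <;> intro h <;> linear_combination h

theorem trivial_bundle_example_Jc_holds_but_a1_fails :
    -- image (J ∘ h) ⊆ image D   (condition (Jc)) ...
    (∀ v : ℂ, Horiz (hC v)) ∧
      -- ... but D is not adapted to h: (a1) fails
      ¬ (∀ (v : ℂ) (V : VF2), Differentiable ℂ V →
          Horiz (brktAt (hC v) (ηD V))) := by
  refine ⟨horiz_hC, fun hadapted => ?_⟩
  have hdy : Differentiable ℂ (fun _ => (0, 1) : VF2) := differentiable_const _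
  have hcurv := (horiz_brktAt_hC_ηD_iff 1 hdy).1 (hadapted 1 _ hdy) 0
  norm_num at hcurv
end
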